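/- arXiv:0910.1727 — 3 statements merged into one kernel-verified Lean document; each statement's English description precedes it below -/
import Mathlib

section
/- Let σ be a permutation of Fin (2d) (with d ≥ 2) that maps the block {0,...,d-1} onto {d,...,2d-1} and vice versa, and let ω^d(σ) denote the permutation of Fin (3d) obtained by shifting σ up by d (acting on {d,...,3d-1}, fixing {0,...,d-1}). Then the pair σ, ω^d(σ) satisfies the braid relation σ·ω^d(σ)·σ = ω^d(σ)·σ·ω^d(σ) (regarding σ as fixing {2d,...,3d-1}) if and only if σ² commutes with the shift: σ²(d+i) = d + σ²(i) for all i in {0,...,d-1}. -/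
/-- The shift of a permutation of `ℕ` up by `d`: fixes `{0,…,d-1}` and acts as `σ`
conjugated by `k ↦ k + d` above. -/
def shift (d : ℕ) (σ : Equiv.Perm ℕ) : Equiv.Perm ℕ where
  toFun k := if k < d then k else σ (k - d) + d
  invFun k := if k < d then k else σ⁻¹ (k - d) + d
  left_inv k := by
    by_cases h : k < d
    · simp [h]
    · dsimp only
      rw [if_neg h, if_neg (by omega), Nat.add_sub_cancel, Equiv.Perm.inv_def, Equiv.symm_apply_apply]
      omega
  right_inv k := by
    by_cases h : k < d
    · simp [h]
    · dsimp only
      rw [if_neg h, if_neg (by omega), Nat.add_sub_cancel, Equiv.Perm.inv_def, Equiv.apply_symm_apply]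
      omega

/-- The involution of `ℕ` swapping the blocks `{0,…,d-1}` and `{d,…,2d-1}`. -/
def theta (d : ℕ) : Equiv.Perm ℕ :=
  Function.Involutive.toPerm
    (fun k => if k < d then k + d else if k < 2 * d then k - d else k)
    (by intro k; dsimp only; split_ifs <;> omega)

/-!
By counting, `σ` also sends `[d, 2d)` into `[0, d)`. Tracking each block through both sides of
the braid relation, the two sides agree off `[d, 2d)` for every such `σ`, while at `d + i`
the left side is `σ² (d + i)` and the right side is `d + σ² i`.
-/

open Finset

theorem Function.Injective.mem_of_apply_mem {α β : Type*} [DecidableEq β] {f : α → β}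
    (hf : Function.Injective f) {s : Finset α} {t : Finset β} (hst : ∀ x ∈ s, f x ∈ t)
    (hcard : #t ≤ #s) {x : α} (hx : f x ∈ t) : x ∈ s := by
  have himage : s.image f = t :=
    eq_of_subset_of_card_le (image_subset_iff.mpr hst) (by rwa [card_image_of_injective s hf])
  obtain ⟨y, hy, hyx⟩ := mem_image.mp (himage ▸ hx)
  exact hf hyx ▸ hy

section BlockSwap

variable {d : ℕ} {σ : Equiv.Perm ℕ}

theorem shift_apply_of_lt (σ : Equiv.Perm ℕ) {k : ℕ} (hk : k < d) : shift d σ k = k :=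
  if_pos hk

theorem shift_apply_add (σ : Equiv.Perm ℕ) (k : ℕ) : shift d σ (k + d) = σ k + d := by
  simp [shift]

theorem apply_lt_of_mapsTo_block (hfix : ∀ k, 2 * d ≤ k → σ k = k)
    (hblock : ∀ i < d, d ≤ σ i ∧ σ i < 2 * d) {k : ℕ} (hdk : d ≤ k) (hk : k < 2 * d) :
    σ k < d := by
  have hlt : σ k < 2 * d := by
    by_contra! h
    have := σ.injective (hfix _ h)
    omega
  by_contra! h
  have := mem_range.mp <| σ.injective.mem_of_apply_mem (s := range d) (t := Ico d (2 * d))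
    (fun i hi => mem_Ico.mpr (hblock i (mem_range.mp hi)))
    (by rw [Nat.card_Ico, card_range]; omega) (mem_Ico.mpr ⟨h, hlt⟩)
  omega

theorem braid_apply_of_lt (hfix : ∀ k, 2 * d ≤ k → σ k = k)
    (hblock : ∀ i < d, d ≤ σ i ∧ σ i < 2 * d) {k : ℕ} (hk : k < d) :
    (σ * shift d σ * σ) k = (shift d σ * σ * shift d σ) k := by
  obtain ⟨j, hj⟩ : ∃ j, σ k = j + d := ⟨σ k - d, by have := hblock k hk; omega⟩
  have hj' : j < d := by have := hblock k hk; omega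
  have hfixed : σ (σ j + d) = σ j + d := hfix _ (by have := hblock j hj'; omega)
  simp [shift_apply_of_lt σ hk, hj, shift_apply_add, hfixed]

theorem braid_apply_of_two_mul_le (hfix : ∀ k, 2 * d ≤ k → σ k = k)
    (hblock : ∀ i < d, d ≤ σ i ∧ σ i < 2 * d) {k : ℕ} (hk : 2 * d ≤ k) :
    (σ * shift d σ * σ) k = (shift d σ * σ * shift d σ) k := by
  obtain ⟨i, rfl⟩ : ∃ i, k = i + d := ⟨k - d, by omega⟩
  rcases lt_or_ge i (2 * d) with hi | hi
  · have hσi := apply_lt_of_mapsTo_block hfix hblock (by omega) hi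
    have hσσi := apply_lt_of_mapsTo_block hfix hblock (k := σ i + d) (by omega) (by omega)
    simp [hfix _ hk, shift_apply_add, shift_apply_of_lt σ hσσi]
  · simp [hfix _ hk, shift_apply_add, hfix _ hi]

theorem mul_shift_mul_apply_add (hfix : ∀ k, 2 * d ≤ k → σ k = k)
    (hblock : ∀ i < d, d ≤ σ i ∧ σ i < 2 * d) {i : ℕ} (hi : i < d) :
    (σ * shift d σ * σ) (d + i) = (σ * σ) (d + i) := by
  have := apply_lt_of_mapsTo_block hfix hblock (k := d + i) (by omega) (by omega)
  simp [shift_apply_of_lt σ this]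

theorem shift_mul_mul_shift_apply_add (hfix : ∀ k, 2 * d ≤ k → σ k = k)
    (hblock : ∀ i < d, d ≤ σ i ∧ σ i < 2 * d) {i : ℕ} (hi : i < d) :
    (shift d σ * σ * shift d σ) (d + i) = d + (σ * σ) i := by
  have hfixed : σ (σ i + d) = σ i + d := hfix _ (by have := hblock i hi; omega)
  simp [add_comm d, shift_apply_add, hfixed]

end BlockSwap

theorem stmt_2_general (d : ℕ) (σ : Equiv.Perm ℕ)
    (hfix : ∀ k, 2 * d ≤ k → σ k = k)
    (hblock : ∀ i < d, d ≤ σ i ∧ σ i < 2 * d) :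
    σ * shift d σ * σ = shift d σ * σ * shift d σ ↔
      ∀ i < d, (σ * σ) (d + i) = d + (σ * σ) i := by
  constructor
  · intro h i hi
    rw [← mul_shift_mul_apply_add hfix hblock hi, h, shift_mul_mul_shift_apply_add hfix hblock hi]
  · intro h
    ext k
    rcases lt_or_ge k d with hk | hk
    · exact braid_apply_of_lt hfix hblock hk
    rcases lt_or_ge k (2 * d) with hk2 | hk2
    · obtain ⟨i, rfl⟩ : ∃ i, k = d + i := ⟨k - d, by omega⟩
      rw [mul_shift_mul_apply_add hfix hblock (by omega), h i (by omega),
        shift_mul_mul_shift_apply_add hfix hblock (by omega)]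
    · exact braid_apply_of_two_mul_le hfix hblock hk2

/-- Let `σ` be a permutation of `{0,…,2d-1}` (d ≥ 2) mapping the block `{0,…,d-1}`
onto `{d,…,2d-1}` (and hence vice versa). Then `σ` and its shift `ω^d(σ)` satisfy the
braid relation iff `σ²(d+i) = d + σ²(i)` for all `i < d`. -/
theorem stmt_2 (d : ℕ) (hd : 2 ≤ d) (σ : Equiv.Perm ℕ)
    (hfix : ∀ k, 2 * d ≤ k → σ k = k)
    (hblock : ∀ i < d, d ≤ σ i ∧ σ i < 2 * d) :
    σ * shift d σ * σ = shift d σ * σ * shift d σ ↔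
      ∀ i < d, (σ * σ) (d + i) = d + (σ * σ) i :=
  stmt_2_general d σ hfix hblock
end

section
/- With H_n ⊆ ℤⁿ as above (basis f₁,...,f_{n-1}, 2e_n), the quotient H_n / (H_n ∩ qℤⁿ) is isomorphic as an abelian group to (ℤ/qℤ)^{n-1} × ℤ/(q/gcd(q,2))ℤ. -/
/-- The `i`-th standard basis vector of `ℤⁿ` (indexed from 0). -/
def stdVec (n i : ℕ) : Fin n → ℤ := fun j => if (j : ℕ) = i then 1 else 0

/-- The submodule `qℤⁿ` of vectors all of whose coordinates are divisible by `q`. -/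
def qZn (n q : ℕ) : Submodule ℤ (Fin n → ℤ) where
  carrier := {x | ∀ j, (q : ℤ) ∣ x j}
  add_mem' hx hy j := dvd_add (hx j) (hy j)
  zero_mem' j := dvd_zero _
  smul_mem' c x hx j := Dvd.dvd.mul_left (hx j) c

namespace Aux13

variable (n : ℕ)

def fvec (i : Fin (n-1)) : Fin n → ℤ := stdVec n i + stdVec n ((i:ℕ)+1)

def hvec : Fin n → ℤ := (2 • stdVec n (n-1) : Fin n → ℤ)

def Phi : ((Fin (n-1) → ℤ) × ℤ) →ₗ[ℤ] (Fin n → ℤ) where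
  toFun p := (∑ i, p.1 i • fvec n i) + p.2 • hvec n
  map_add' p q := by
    simp [add_smul, Finset.sum_add_distrib]
    abel
  map_smul' c p := by
    simp [mul_smul, Finset.smul_sum, smul_add]

lemma Phi_apply (c : Fin (n-1) → ℤ) (d : ℤ) (j : Fin n) :
    Phi n (c, d) j = (if h : (j:ℕ) < n-1 then c ⟨j, h⟩ else 0)
      + (if h : 0 < (j:ℕ) ∧ (j:ℕ) - 1 < n-1 then c ⟨(j:ℕ)-1, h.2⟩ else 0)
      + (if (j:ℕ) = n-1 then 2*d else 0) := by
  have : Phi n (c, d) j = (∑ i, c i * fvec n i j) + d * hvec n j := by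
    simp [Phi]
  rw [this]
  have h1 : ∀ i : Fin (n-1), c i * fvec n i j
      = c i * (if (j:ℕ) = (i:ℕ) then 1 else 0) + c i * (if (j:ℕ) = (i:ℕ)+1 then 1 else 0) := by
    intro i; simp [fvec, stdVec, mul_add]
  rw [Finset.sum_congr rfl (fun i _ => h1 i), Finset.sum_add_distrib]
  have h2 : (∑ i : Fin (n-1), c i * (if (j:ℕ) = (i:ℕ) then 1 else 0))
      = (if h : (j:ℕ) < n-1 then c ⟨j, h⟩ else 0) := by
    split_ifs with h
    · rw [Finset.sum_eq_single (⟨(j:ℕ), h⟩ : Fin (n-1))]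
      · simp
      · intro i _ hi
        have : (j:ℕ) ≠ (i:ℕ) := fun hji => hi (by ext; simp [hji.symm])
        simp [this]
      · simp
    · apply Finset.sum_eq_zero
      intro i _
      have : (j:ℕ) ≠ (i:ℕ) := fun hji => h (hji ▸ i.isLt)
      simp [this]
  have h3 : (∑ i : Fin (n-1), c i * (if (j:ℕ) = (i:ℕ)+1 then 1 else 0))
      = (if h : 0 < (j:ℕ) ∧ (j:ℕ) - 1 < n-1 then c ⟨(j:ℕ)-1, h.2⟩ else 0) := by
    split_ifs with h
    · rw [Finset.sum_eq_single (⟨(j:ℕ)-1, h.2⟩ : Fin (n-1))]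
      · simp [Nat.sub_add_cancel h.1]
      · intro i _ hi
        have : (j:ℕ) ≠ (i:ℕ)+1 := by
          intro hji
          apply hi; ext; simp [hji]
        simp [this]
      · simp
    · apply Finset.sum_eq_zero
      intro i _
      have : (j:ℕ) ≠ (i:ℕ)+1 := by
        intro hji
        apply h
        constructor
        · omega
        · have := i.isLt; omega
      simp [this]
  have h4 : d * hvec n j = (if (j:ℕ) = n-1 then 2*d else 0) := by
    simp [hvec, stdVec]
    split_ifs <;> ring
  rw [h2, h3, h4]





lemma main_dvd (n : ℕ) (hn : 3 ≤ n) (c : Fin (n-1) → ℤ) (d : ℤ) (Q : ℤ) :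
    (∀ j, Q ∣ Phi n (c, d) j) ↔ (∀ i, Q ∣ c i) ∧ Q ∣ 2*d := by
  constructor
  · intro hall
    have hc : ∀ k : ℕ, ∀ hk : k < n-1, Q ∣ c ⟨k, hk⟩ := by
      intro k
      induction k using Nat.strong_induction_on with
      | _ k ih =>
        intro hk
        have hj := hall ⟨k, by omega⟩
        rw [Phi_apply] at hj
        simp only at hj
        rw [dif_pos hk, if_neg (by omega : ¬ (k = n-1))] at hj
        rcases Nat.eq_zero_or_pos k with h0 | h0
        · subst h0
          rw [dif_neg (by omega)] at hj
          simpa using hj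
        · rw [dif_pos ⟨h0, by omega⟩] at hj
          have h1 := ih (k-1) (by omega) (by omega)
          simp only [add_zero] at hj
          simpa using dvd_sub hj h1
    refine ⟨fun i => by simpa using hc i i.isLt, ?_⟩
    have hj := hall ⟨n-1, by omega⟩
    rw [Phi_apply] at hj
    simp only at hj
    rw [dif_neg (by omega), dif_pos ⟨by omega, by omega⟩] at hj
    have h2 := hc (n-1-1) (by omega)
    simp only [if_true, zero_add, if_pos rfl] at hj
    simpa using dvd_sub hj h2
  · rintro ⟨hc, hd⟩ j
    rw [Phi_apply]
    refine dvd_add (dvd_add ?_ ?_) ?_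
    · split_ifs with h
      · exact hc _
      · exact dvd_zero _
    · split_ifs with h
      · exact hc _
      · exact dvd_zero _
    · split_ifs with h
      · exact hd
      · exact dvd_zero _


lemma Phi_inj (n : ℕ) (hn : 3 ≤ n) : Function.Injective (Phi n) := by
  rw [injective_iff_map_eq_zero]
  rintro ⟨c, d⟩ h
  have h0 : ∀ j, (0:ℤ) ∣ Phi n (c, d) j := by
    intro j; rw [show ((c,d) : (Fin (n-1) → ℤ) × ℤ) = (c,d) from rfl, h]; simp
  obtain ⟨hc, hd⟩ := (main_dvd n hn c d 0).mp h0
  have hc' : c = 0 := funext fun i => zero_dvd_iff.mp (hc i)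
  have hd' : d = 0 := by have := zero_dvd_iff.mp hd; omega
  simp [hc', hd', Prod.ext_iff]

lemma range_Phi (n : ℕ) (hn : 3 ≤ n) : LinearMap.range (Phi n) = Submodule.span ℤ
    ({x | ∃ i < n - 1, x = stdVec n i + stdVec n (i + 1)} ∪
      {(2 • stdVec n (n - 1) : Fin n → ℤ)}) := by
  apply le_antisymm
  · rintro x ⟨⟨c, d⟩, rfl⟩
    show (∑ i, c i • fvec n i) + d • hvec n ∈ _
    refine Submodule.add_mem _
      (Submodule.sum_mem _ fun i _ => Submodule.smul_mem _ _ ?_)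
      (Submodule.smul_mem _ _ ?_)
    · exact Submodule.subset_span (Or.inl ⟨(i:ℕ), i.isLt, rfl⟩)
    · exact Submodule.subset_span (Or.inr rfl)
  · rw [Submodule.span_le]
    rintro x (⟨i, hi, rfl⟩ | rfl)
    · refine ⟨(Pi.single ⟨i, hi⟩ 1, 0), ?_⟩
      show (∑ i', Pi.single (⟨i, hi⟩ : Fin (n-1)) 1 i' • fvec n i') + (0:ℤ) • hvec n = _
      simp [Pi.single_apply, ite_smul, fvec, smul_add, Finset.sum_add_distrib, Finset.sum_ite_eq']
    · refine ⟨(0, 1), ?_⟩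
      show (∑ i', (0 : Fin (n-1) → ℤ) i' • fvec n i') + (1:ℤ) • hvec n = _
      simp [hvec]

lemma dvd_two_iff (q : ℕ) (hq : 1 ≤ q) (d : ℤ) :
    (q:ℤ) ∣ 2*d ↔ ((q / Nat.gcd q 2 : ℕ) : ℤ) ∣ d := by
  rcases Nat.even_or_odd q with he | ho
  · obtain ⟨k, hk⟩ := he
    have h2 : 2 ∣ q := ⟨k, by omega⟩
    have hg : Nat.gcd q 2 = 2 := by
      rw [Nat.gcd_comm]; exact Nat.gcd_eq_left h2
    have hqk : q = 2 * k := by omega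
    rw [hg, hqk]
    rw [Nat.mul_div_cancel_left k (by norm_num)]
    push_cast
    exact mul_dvd_mul_iff_left (by norm_num : (2:ℤ) ≠ 0)
  · have hg : Nat.gcd q 2 = 1 := ho.coprime_two_right
    rw [hg, Nat.div_one]
    constructor
    · intro h
      have hco : IsCoprime (q:ℤ) 2 := by
        rw [Int.isCoprime_iff_gcd_eq_one]
        simpa [Int.gcd] using hg
      exact hco.dvd_of_dvd_mul_left h
    · intro h; exact h.mul_left 2


def Rmap (n q : ℕ) : ((Fin (n-1) → ℤ) × ℤ) →ₗ[ℤ]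
    ((Fin (n-1) → ZMod q) × ZMod (q / Nat.gcd q 2)) where
  toFun p := (fun i => (p.1 i : ZMod q), (p.2 : ZMod (q / Nat.gcd q 2)))
  map_add' p r := by simp [Prod.ext_iff]; rfl
  map_smul' c p := by
    simp [Prod.ext_iff, funext_iff, zsmul_eq_mul]

lemma Rmap_surj (n q : ℕ) : Function.Surjective (Rmap n q) := by
  rintro ⟨a, b⟩
  choose f hf using fun i => ZMod.intCast_surjective (a i)
  obtain ⟨db, hdb⟩ := ZMod.intCast_surjective b
  exact ⟨(f, db), by simp [Rmap, hf, hdb]⟩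

end Aux13

/-- With `Hₙ ⊆ ℤⁿ` the submodule with ℤ-basis `f_0 = e_0+e_1, …, f_{n-2} = e_{n-2}+e_{n-1}`,
`h = 2e_{n-1}`, the quotient `Hₙ/(Hₙ ∩ qℤⁿ)` is isomorphic as an abelian group to
`(ℤ/q)^{n-1} × ℤ/(q/gcd(q,2))`. -/
theorem stmt_13 (n q : ℕ) (hn : 3 ≤ n) (hq : 1 ≤ q)
    (H : Submodule ℤ (Fin n → ℤ))
    (hH : H = Submodule.span ℤ
      ({x | ∃ i < n - 1, x = stdVec n i + stdVec n (i + 1)} ∪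
        {(2 • stdVec n (n - 1) : Fin n → ℤ)})) :
    Nonempty ((↥H ⧸ (Submodule.comap H.subtype (qZn n q))) ≃ₗ[ℤ]
      ((Fin (n - 1) → ZMod q) × ZMod (q / Nat.gcd q 2))) := by
  classical
  have hrange : LinearMap.range (Aux13.Phi n) = H := by
    rw [Aux13.range_Phi n hn, hH]
  let e : ((Fin (n-1) → ℤ) × ℤ) ≃ₗ[ℤ] ↥H :=
    (LinearEquiv.ofInjective (Aux13.Phi n) (Aux13.Phi_inj n hn)).trans
      (LinearEquiv.ofEq _ _ hrange)
  have hcoe : ∀ p, ((e p : ↥H) : Fin n → ℤ) = Aux13.Phi n p := by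
    intro p
    simp only [e, LinearEquiv.trans_apply, LinearEquiv.coe_ofEq_apply,
      LinearEquiv.ofInjective_apply]
  let ψ : ↥H →ₗ[ℤ] ((Fin (n - 1) → ZMod q) × ZMod (q / Nat.gcd q 2)) :=
    (Aux13.Rmap n q) ∘ₗ (e.symm : ↥H →ₗ[ℤ] ((Fin (n-1) → ℤ) × ℤ))
  have hsurj : Function.Surjective ψ :=
    (Aux13.Rmap_surj n q).comp e.symm.surjective
  have hker : LinearMap.ker ψ = Submodule.comap H.subtype (qZn n q) := by
    ext x
    obtain ⟨p, rfl⟩ := e.surjective x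
    have hx : ((e p : ↥H) : Fin n → ℤ) = Aux13.Phi n p := hcoe p
    simp only [LinearMap.mem_ker, Submodule.mem_comap, Submodule.subtype_apply, ψ,
      LinearMap.comp_apply, LinearEquiv.coe_coe, LinearEquiv.symm_apply_apply]
    have hmem : ((e p : ↥H) : Fin n → ℤ) ∈ qZn n q ↔ ∀ j, (q:ℤ) ∣ Aux13.Phi n p j := by
      rw [hx]; rfl
    rw [hmem]
    obtain ⟨c, d⟩ := p
    rw [Aux13.main_dvd n hn c d (q:ℤ)]
    rw [Aux13.dvd_two_iff q hq d]
    simp only [Aux13.Rmap, LinearMap.coe_mk, AddHom.coe_mk, Prod.mk_eq_zero, funext_iff,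
      Pi.zero_apply, ZMod.intCast_zmod_eq_zero_iff_dvd]
  exact ⟨(Submodule.quotEquivOfEq _ _ hker.symm).trans (ψ.quotKerEquivOfSurjective hsurj)⟩
end

section
/- With the hypotheses above and q (the order of τ) odd, the short exact sequence 1 → A_n(σ) → B_n(σ) → S_n → 1 splits: there exists a group homomorphism ρ: S_n → B_n(σ) whose composition with the projection B_n(σ) → B_n(σ)/A_n(σ) ≅ S_n is the identity. Concretely, ρ can be defined by sending the transposition (s,s+1) to σ_s·ω^{(s-1)d}(a) where a = τ^k·ω^d(τ^ℓ) with k+ℓ ≡ -1 (mod q). -/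
open Equiv Set

theorem Subgroup.exists_splitting_of_le_sup {G Q : Type*} [Group G] [Group Q]
    {P B T : Subgroup G} (Φ : P →* Q) (ρ : Q →* G) (hρP : ∀ x, ρ x ∈ P)
    (hΦρ : ∀ x, Φ ⟨ρ x, hρP x⟩ = x) (hT : T ≤ Φ.ker.map P.subtype)
    (hnorm : ρ.range ≤ normalizer (T : Set G)) (hBP : B ≤ P) (hB : B ≤ T ⊔ ρ.range)
    (hρB : ρ.range ≤ B) :
    ∃ φ : B →* Q, Function.Surjective φ ∧ φ.ker = (B ⊓ T).subgroupOf B ∧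
      (∀ b : B, φ b = Φ (inclusion hBP b)) ∧
      ∃ ρ' : Q →* B, φ.comp ρ' = MonoidHom.id Q ∧ ∀ x, (ρ' x : G) = ρ x := by
  refine ⟨Φ.comp (inclusion hBP), fun x => ⟨⟨ρ x, hρB ⟨x, rfl⟩⟩, hΦρ x⟩, ?_, fun _ => rfl,
    ρ.codRestrict B fun x => hρB ⟨x, rfl⟩, MonoidHom.ext hΦρ, fun _ => rfl⟩
  ext b
  simp only [MonoidHom.mem_ker, MonoidHom.comp_apply, mem_subgroupOf, mem_inf,
    SetLike.coe_mem, true_and]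
  constructor
  · intro hb
    obtain ⟨t, htT, _, ⟨x, rfl⟩, hbt⟩ :=
      (coe_mul_of_right_le_normalizer_left T _ hnorm).subset (SetLike.mem_coe.mpr (hB b.2))
    obtain ⟨t', ht', rfl⟩ := hT htT
    have hsplit : inclusion hBP b = t' * ⟨ρ x, hρP x⟩ := Subtype.ext hbt.symm
    rw [hsplit, map_mul, MonoidHom.mem_ker.mp ht', hΦρ, one_mul] at hb
    simpa [← hbt, hb] using htT
  · intro hbT
    obtain ⟨t', ht', heq⟩ := hT hbT
    rwa [show inclusion hBP b = t' from Subtype.ext heq.symm]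

lemma Equiv.Perm.closure_swap_succ (n : ℕ) :
    Subgroup.closure {g : Perm (Fin n) | ∃ m, ∃ hm : m + 1 < n, g = swap ⟨m, by omega⟩ ⟨m + 1, hm⟩}
      = ⊤ := by
  rcases n with _ | n
  · exact Subsingleton.elim _ _
  refine Subgroup.closure_eq_top_of_mclosure_eq_top (eq_top_iff.mpr ?_)
  rw [← mclosure_swap_castSucc_succ n]
  refine Submonoid.closure_mono ?_
  rintro _ ⟨i, rfl⟩
  exact ⟨i, by omega, rfl⟩

lemma MonoidHom.range_le_of_swap_succ_mem {n : ℕ} {G : Type*} [Group G]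
    (f : Perm (Fin n) →* G) {H : Subgroup G}
    (hf : ∀ m, ∀ hm : m + 1 < n, f (swap ⟨m, by omega⟩ ⟨m + 1, hm⟩) ∈ H) : f.range ≤ H := by
  rw [range_eq_map, ← Perm.closure_swap_succ, map_closure, Subgroup.closure_le]
  rintro _ ⟨_, ⟨m, hm, rfl⟩, rfl⟩
  exact hf m hm

lemma Equiv.Perm.extendDomain_finEquivSubtype_apply_of_le {n j : ℕ} (x : Perm (Fin n))
    (hj : n ≤ j) : x.extendDomain Fin.equivSubtype j = j :=
  Perm.extendDomain_apply_not_subtype _ _ (by omega)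

lemma Equiv.Perm.extendDomain_finEquivSubtype_apply {n : ℕ} (x : Perm (Fin n)) (k : Fin n) :
    x.extendDomain Fin.equivSubtype k = x k :=
  Perm.extendDomain_apply_image x Fin.equivSubtype k

lemma Equiv.Perm.extendDomain_finEquivSubtype_swap {n : ℕ} (i j : Fin n) :
    (swap i j).extendDomain Fin.equivSubtype = swap (i : ℕ) j := by
  ext y
  by_cases hy : y < n
  · have := (swap i j).extendDomain_finEquivSubtype_apply ⟨y, hy⟩
    simp only [swap_apply_def, Fin.ext_iff] at this ⊢
    rw [this]
    split_ifs <;> rfl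
  · rw [extendDomain_finEquivSubtype_apply_of_le _ (by omega),
      swap_apply_of_ne_of_ne (by omega) (by omega)]

lemma Nat.mul_add_div_of_lt {d j r : ℕ} (hr : r < d) : (j * d + r) / d = j := by
  rw [add_comm, Nat.add_mul_div_right _ _ (by omega), Nat.div_eq_of_lt hr, zero_add]

abbrev supportedBelow (c : ℕ) : Subgroup (Perm ℕ) := fixingSubgroup (Perm ℕ) (Ici c)

section supportedBelow

variable {c : ℕ} {g : Perm ℕ}

lemma apply_eq_self_of_mem_supportedBelow (hg : g ∈ supportedBelow c) {x : ℕ} (hx : c ≤ x) :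
    g x = x :=
  (mem_fixingSubgroup_iff _).mp hg x hx

lemma apply_lt_of_mem_supportedBelow (hg : g ∈ supportedBelow c) {x : ℕ} (hx : x < c) :
    g x < c := by
  by_contra! h
  have := g.injective (apply_eq_self_of_mem_supportedBelow hg h)
  omega

lemma mulSingle_apply_mem_supportedBelow (hg : g ∈ supportedBelow c) (i j : ℕ) :
    (Pi.mulSingle i g : ℕ → Perm ℕ) j ∈ supportedBelow c := by
  rw [Pi.mulSingle_apply]
  split_ifs
  exacts [hg, one_mem _]

end supportedBelow

section shift

variable (d : ℕ) (g h : Perm ℕ)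

lemma shift_apply_of_lt_s16 {y : ℕ} (hy : y < d) : shift d g y = y := if_pos hy

lemma shift_apply_add_s16 (y : ℕ) : shift d g (y + d) = g y + d := by
  simp [shift]

lemma shift_zero : shift 0 g = g := by
  ext y; simpa using shift_apply_add_s16 0 g y

lemma shift_mul : shift d (g * h) = shift d g * shift d h := by
  ext y
  rcases lt_or_ge y d with hy | hy
  · simp [shift_apply_of_lt_s16 d _ hy]
  · obtain ⟨y, rfl⟩ := Nat.exists_eq_add_of_le' hy
    simp [shift_apply_add_s16]

def shiftHom : Perm ℕ →* Perm ℕ := MonoidHom.mk' (shift d) (shift_mul d)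

lemma shift_pow (k : ℕ) : shift d (g ^ k) = shift d g ^ k := map_pow (shiftHom d) g k

lemma shift_shift (e : ℕ) : shift d (shift e g) = shift (d + e) g := by
  ext y
  rcases lt_or_ge y (d + e) with hy | hy
  · rw [shift_apply_of_lt_s16 _ _ hy]
    rcases lt_or_ge y d with hy' | hy'
    · rw [shift_apply_of_lt_s16 _ _ hy']
    · obtain ⟨y, rfl⟩ := Nat.exists_eq_add_of_le' hy'
      rw [shift_apply_add_s16, shift_apply_of_lt_s16 _ _ (by omega)]
  · obtain ⟨y, rfl⟩ := Nat.exists_eq_add_of_le' hy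
    rw [shift_apply_add_s16, show y + (d + e) = y + e + d by ring, shift_apply_add_s16, shift_apply_add_s16]
    ring

end shift

/-- `(c, π)` are the coordinates of `g` in the wreath product `Perm (Fin d) ≀ Perm ℕ`, for the
blocks `[j*d, (j+1)*d)`. -/
structure IsBlockForm (d : ℕ) (g π : Perm ℕ) (c : ℕ → Perm ℕ) : Prop where
  mem : ∀ j, c j ∈ supportedBelow d
  apply_mul_add : ∀ j r, r < d → g (j * d + r) = π j * d + c j r

namespace IsBlockForm

variable {d : ℕ} {g h π π' : Perm ℕ} {c c' : ℕ → Perm ℕ}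

lemma ext [NeZero d] (hg : IsBlockForm d g π c) (hh : IsBlockForm d h π' c')
    (hπ : ∀ j, π j = π' j) (hc : ∀ j, c j = c' j) : g = h := by
  ext y
  have hr := Nat.mod_lt y (Nat.pos_of_neZero d)
  rw [← Nat.div_add_mod' y d, hg.apply_mul_add _ _ hr, hh.apply_mul_add _ _ hr, hπ, hc]

lemma mul (hg : IsBlockForm d g π c) (hh : IsBlockForm d h π' c') :
    IsBlockForm d (g * h) (π * π') (fun j => c (π' j) * c' j) where
  mem j := mul_mem (hg.mem _) (hh.mem j)
  apply_mul_add j r hr := by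
    rw [Perm.mul_apply, hh.apply_mul_add j r hr,
      hg.apply_mul_add _ _ (apply_lt_of_mem_supportedBelow (hh.mem j) hr)]
    rfl

lemma apply_div [NeZero d] (hg : IsBlockForm d g π c) (y : ℕ) : g y / d = π (y / d) := by
  have hr := Nat.mod_lt y (Nat.pos_of_neZero d)
  rw [← Nat.div_add_mod' y d, hg.apply_mul_add _ _ hr, Nat.mul_add_div_of_lt hr,
    Nat.mul_add_div_of_lt (apply_lt_of_mem_supportedBelow (hg.mem _) hr)]

end IsBlockForm

lemma isBlockForm_shift {d : ℕ} {g : Perm ℕ} (hg : g ∈ supportedBelow d) (m : ℕ) :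
    IsBlockForm d (shift (m * d) g) 1 (Pi.mulSingle m g) where
  mem := mulSingle_apply_mem_supportedBelow hg m
  apply_mul_add j r hr := by
    rcases lt_trichotomy j m with hj | rfl | hj
    · rw [shift_apply_of_lt_s16 _ _ (by nlinarith), Pi.mulSingle_eq_of_ne hj.ne]
      rfl
    · rw [add_comm, shift_apply_add_s16, Pi.mulSingle_eq_same]
      simp [add_comm]
    · obtain ⟨i, rfl⟩ := Nat.exists_eq_add_of_lt hj
      rw [Pi.mulSingle_eq_of_ne (by omega),
        show (m + i + 1) * d + r = ((i + 1) * d + r) + m * d by ring, shift_apply_add_s16,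
        apply_eq_self_of_mem_supportedBelow hg (by nlinarith)]
      simp only [Perm.one_apply]
      ring

lemma commute_shift_mul_shift {d : ℕ} [NeZero d] {g h : Perm ℕ} (hg : g ∈ supportedBelow d)
    (hh : h ∈ supportedBelow d) {i j : ℕ} (hij : i ≠ j) :
    Commute (shift (i * d) g) (shift (j * d) h) :=
  ((isBlockForm_shift hg i).mul (isBlockForm_shift hh j)).ext
    ((isBlockForm_shift hh j).mul (isBlockForm_shift hg i)) (by simp) fun k =>
    congrFun (Pi.mulSingle_commute (f := fun _ : ℕ => Perm ℕ) hij g h).eq k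

def blockPreserving (d : ℕ) : Subgroup (Perm ℕ) where
  carrier := {g | ∀ i j, g i / d = g j / d ↔ i / d = j / d}
  one_mem' _ _ := Iff.rfl
  mul_mem' ha hb i j := (ha _ _).trans (hb i j)
  inv_mem' {g} hg i j := by simpa using (hg (g⁻¹ i) (g⁻¹ j)).symm

def blockPerms (d n : ℕ) : Subgroup (Perm ℕ) := blockPreserving d ⊓ supportedBelow (n * d)

section blockPerms

variable {d n : ℕ} [NeZero d]

lemma IsBlockForm.mem_blockPerms {g π : Perm ℕ} {c : ℕ → Perm ℕ} (hg : IsBlockForm d g π c)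
    (hfix : ∀ j, n ≤ j → π j = j ∧ c j = 1) : g ∈ blockPerms d n := by
  refine ⟨fun i j => by rw [hg.apply_div, hg.apply_div, π.injective.eq_iff], ?_⟩
  refine (mem_fixingSubgroup_iff _).mpr fun y hy => ?_
  have hr := Nat.mod_lt y (Nat.pos_of_neZero d)
  have hn : n ≤ y / d := (Nat.le_div_iff_mul_le (Nat.pos_of_neZero d)).mpr hy
  change g y = y
  conv_lhs => rw [← Nat.div_add_mod' y d]
  rw [hg.apply_mul_add _ _ hr, (hfix _ hn).1, (hfix _ hn).2, Perm.one_apply, Nat.div_add_mod']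

lemma apply_mul_div_lt_of_mem_blockPerms {k : ℕ} {g : Perm ℕ} (hg : g ∈ blockPerms d n)
    (hk : k < n) : g (k * d) / d < n := by
  have := apply_lt_of_mem_supportedBelow hg.2
    (Nat.mul_lt_mul_of_pos_right hk (Nat.pos_of_neZero d))
  rwa [Nat.div_lt_iff_lt_mul (Nat.pos_of_neZero d)]

lemma inv_apply_apply_mul_div_mul_div {g : Perm ℕ} (hg : g ∈ blockPerms d n) (k : ℕ) :
    g⁻¹ (g (k * d) / d * d) / d = k := by
  have hd := Nat.pos_of_neZero d
  rw [((inv_mem hg).1 _ (g (k * d))).mpr (Nat.mul_div_cancel _ hd)]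
  simpa using Nat.mul_div_cancel _ hd

variable (d n) in
def blockPermHom : blockPerms d n →* Perm (Fin n) where
  toFun g :=
    { toFun k := ⟨(g : Perm ℕ) (k * d) / d, apply_mul_div_lt_of_mem_blockPerms g.2 k.2⟩
      invFun k := ⟨(g : Perm ℕ)⁻¹ (k * d) / d,
        apply_mul_div_lt_of_mem_blockPerms (inv_mem g.2) k.2⟩
      left_inv k := Fin.ext (inv_apply_apply_mul_div_mul_div g.2 k)
      right_inv k := Fin.ext (by simpa using inv_apply_apply_mul_div_mul_div (inv_mem g.2) k) }
  map_one' := by ext; simp [Nat.mul_div_cancel _ (Nat.pos_of_neZero d)]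
  map_mul' g h := by
    ext k
    exact (g.2.1 _ _).mpr (Nat.mul_div_cancel _ (Nat.pos_of_neZero d)).symm

lemma IsBlockForm.blockPermHom_apply {g π : Perm ℕ} {c : ℕ → Perm ℕ} (hg : IsBlockForm d g π c)
    (hP : g ∈ blockPerms d n) (k : Fin n) : (blockPermHom d n ⟨g, hP⟩ k : ℕ) = π k := by
  change g (k * d) / d = π k
  rw [hg.apply_div, Nat.mul_div_cancel _ (Nat.pos_of_neZero d)]

lemma closure_shift_zpowers_le_map_ker {τ : Perm ℕ} (hτ : τ ∈ supportedBelow d) :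
    Subgroup.closure {x | ∃ k < n, x ∈ Subgroup.zpowers (shift (k * d) τ)} ≤
      (blockPermHom d n).ker.map (blockPerms d n).subtype := by
  rw [Subgroup.closure_le]
  rintro _ ⟨k, hk, hx⟩
  refine Subgroup.zpowers_le.mpr ?_ hx
  have hP := (isBlockForm_shift hτ k).mem_blockPerms (n := n) fun j hj => by
    simp [Pi.mulSingle_eq_of_ne (show j ≠ k by omega)]
  refine ⟨⟨_, hP⟩, ?_, rfl⟩
  ext j
  simp [(isBlockForm_shift hτ k).blockPermHom_apply hP]

end blockPerms

section twist

variable {d : ℕ} {u : Perm ℕ}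

/-- The conjugate of the block permutation `j * d + r ↦ π j * d + r` by the twist
`j * d + r ↦ j * d + u ^ j r`. -/
def twistFun (d : ℕ) (u π : Perm ℕ) (i : ℕ) : ℕ :=
  π (i / d) * d + (u ^ ((π (i / d) : ℤ) - (i / d : ℕ))) (i % d)

lemma twistFun_mul_add (π : Perm ℕ) {j r : ℕ} (hr : r < d) :
    twistFun d u π (j * d + r) = π j * d + (u ^ ((π j : ℤ) - j)) r := by
  rw [twistFun, Nat.mul_add_div_of_lt hr, Nat.mul_add_mod_of_lt hr]

lemma twistFun_twistFun [NeZero d] (hu : u ∈ supportedBelow d) (π π' : Perm ℕ) (i : ℕ) :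
    twistFun d u π (twistFun d u π' i) = twistFun d u (π * π') i := by
  have hr := Nat.mod_lt i (Nat.pos_of_neZero d)
  rw [← Nat.div_add_mod' i d, twistFun_mul_add _ hr, twistFun_mul_add _ hr,
    twistFun_mul_add _ (apply_lt_of_mem_supportedBelow (zpow_mem hu _) hr),
    ← Perm.mul_apply (u ^ _), ← zpow_add, sub_add_sub_cancel, Perm.mul_apply]

lemma twistFun_one (i : ℕ) : twistFun d u 1 i = i := by
  simp [twistFun, Nat.div_add_mod']

def twistHom (d : ℕ) [NeZero d] (u : Perm ℕ) (hu : u ∈ supportedBelow d) :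
    Perm ℕ →* Perm ℕ where
  toFun π :=
    { toFun := twistFun d u π
      invFun := twistFun d u π⁻¹
      left_inv i := by rw [twistFun_twistFun hu, inv_mul_cancel, twistFun_one]
      right_inv i := by rw [twistFun_twistFun hu, mul_inv_cancel, twistFun_one] }
  map_one' := Equiv.ext twistFun_one
  map_mul' π π' := Equiv.ext fun i => (twistFun_twistFun hu π π' i).symm

variable [NeZero d] (hu : u ∈ supportedBelow d)

lemma isBlockForm_twistHom (π : Perm ℕ) :
    IsBlockForm d (twistHom d u hu π) π (fun j => u ^ ((π j : ℤ) - j)) where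
  mem _ := zpow_mem hu _
  apply_mul_add _ _ hr := twistFun_mul_add π hr

lemma twistHom_mul_shift {τ : Perm ℕ} (hτ : τ ∈ supportedBelow d) (huτ : Commute u τ)
    (π : Perm ℕ) (j : ℕ) :
    twistHom d u hu π * shift (j * d) τ = shift (π j * d) τ * twistHom d u hu π := by
  refine ((isBlockForm_twistHom hu π).mul (isBlockForm_shift hτ j)).ext
    ((isBlockForm_shift hτ (π j)).mul (isBlockForm_twistHom hu π)) (by simp) fun i => ?_
  simp only [Perm.one_apply, Pi.mulSingle_apply, π.injective.eq_iff]
  split_ifs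
  · exact (huτ.zpow_left _).eq
  · simp

end twist

def twistSection (d n : ℕ) [NeZero d] (u : Perm ℕ) (hu : u ∈ supportedBelow d) :
    Perm (Fin n) →* Perm ℕ :=
  (twistHom d u hu).comp (Perm.extendDomainHom Fin.equivSubtype)

section twistSection

variable {d n : ℕ} [NeZero d] {u : Perm ℕ} (hu : u ∈ supportedBelow d)

lemma isBlockForm_twistSection (x : Perm (Fin n)) :
    IsBlockForm d (twistSection d n u hu x) (x.extendDomain Fin.equivSubtype)
      (fun j => u ^ ((x.extendDomain Fin.equivSubtype j : ℤ) - j)) :=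
  isBlockForm_twistHom hu _

lemma twistSection_mem_blockPerms (x : Perm (Fin n)) : twistSection d n u hu x ∈ blockPerms d n :=
  (isBlockForm_twistSection hu x).mem_blockPerms fun j hj => by
    simp [Perm.extendDomain_finEquivSubtype_apply_of_le x hj]

lemma blockPermHom_twistSection (x : Perm (Fin n)) :
    blockPermHom d n ⟨_, twistSection_mem_blockPerms hu x⟩ = x := by
  ext k
  rw [(isBlockForm_twistSection hu x).blockPermHom_apply,
    Perm.extendDomain_finEquivSubtype_apply]

lemma twistSection_swap {m : ℕ} (hm : m + 1 < n) :
    twistSection d n u hu (swap ⟨m, by omega⟩ ⟨m + 1, hm⟩) = twistHom d u hu (swap m (m + 1)) :=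
  congrArg (twistHom d u hu) (Perm.extendDomain_finEquivSubtype_swap _ _)

lemma range_twistSection_le_normalizer {τ : Perm ℕ} (hτ : τ ∈ supportedBelow d)
    (huτ : Commute u τ) :
    (twistSection d n u hu).range ≤ Subgroup.normalizer
      (Subgroup.closure {x | ∃ k < n, x ∈ Subgroup.zpowers (shift (k * d) τ)} : Set (Perm ℕ)) := by
  rw [Subgroup.le_normalizer_closure_iff]
  rintro _ ⟨x, rfl⟩ _ ⟨k, hk, z, rfl⟩
  refine Subgroup.subset_closure ⟨x.extendDomain Fin.equivSubtype k, ?_, z, ?_⟩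
  · simp [Perm.extendDomain_finEquivSubtype_apply x ⟨k, hk⟩]
  · simp only [twistSection, MonoidHom.comp_apply, Perm.extendDomainHom_apply]
    rw [← conj_zpow, twistHom_mul_shift hu hτ huτ, mul_inv_cancel_right]

end twistSection

section generators

variable {d : ℕ}

lemma theta_apply (y : ℕ) :
    theta d y = if y < d then y + d else if y < 2 * d then y - d else y := rfl

lemma theta_apply_of_lt {r : ℕ} (hr : r < d) : theta d r = r + d := if_pos hr

lemma theta_apply_add {r : ℕ} (hr : r < d) : theta d (r + d) = r := by
  rw [theta_apply, if_neg (by omega), if_pos (by omega), Nat.add_sub_cancel]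

lemma theta_apply_of_le {y : ℕ} (hy : 2 * d ≤ y) : theta d y = y := by
  rw [theta_apply, if_neg (by omega), if_neg (by omega)]

variable {ς₁ ς₂ : Perm ℕ}

lemma theta_mul_shift_apply_of_lt (h₁ : ς₁ ∈ supportedBelow d) {r : ℕ} (hr : r < d) :
    (theta d * ς₁ * shift d ς₂) r = ς₁ r + d := by
  simp only [Perm.mul_apply, shift_apply_of_lt_s16 _ _ hr,
    theta_apply_of_lt (apply_lt_of_mem_supportedBelow h₁ hr)]

lemma theta_mul_shift_apply_add (h₁ : ς₁ ∈ supportedBelow d) (h₂ : ς₂ ∈ supportedBelow d)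
    {r : ℕ} (hr : r < d) : (theta d * ς₁ * shift d ς₂) (r + d) = ς₂ r := by
  simp only [Perm.mul_apply, shift_apply_add_s16, apply_eq_self_of_mem_supportedBelow h₁
    (Nat.le_add_left d _), theta_apply_add (apply_lt_of_mem_supportedBelow h₂ hr)]

lemma theta_mul_shift_apply_of_le (h₁ : ς₁ ∈ supportedBelow d) (h₂ : ς₂ ∈ supportedBelow d)
    {y : ℕ} (hy : 2 * d ≤ y) : (theta d * ς₁ * shift d ς₂) y = y := by
  obtain ⟨z, rfl⟩ := Nat.exists_eq_add_of_le' (show d ≤ y by omega)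
  rw [Perm.mul_apply, Perm.mul_apply, shift_apply_add_s16,
    apply_eq_self_of_mem_supportedBelow h₂ (by omega),
    apply_eq_self_of_mem_supportedBelow h₁ (by omega), theta_apply_of_le hy]

lemma isBlockForm_shift_theta_mul_shift (h₁ : ς₁ ∈ supportedBelow d)
    (h₂ : ς₂ ∈ supportedBelow d) (m : ℕ) :
    IsBlockForm d (shift (m * d) (theta d * ς₁ * shift d ς₂)) (swap m (m + 1))
      (fun j => if j = m then ς₁ else if j = m + 1 then ς₂ else 1) where
  mem j := by split_ifs <;> simp [h₁, h₂]
  apply_mul_add j r hr := by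
    rcases lt_or_ge j m with hj | hj
    · rw [shift_apply_of_lt_s16 _ _ (by nlinarith), swap_apply_of_ne_of_ne (by omega) (by omega),
        if_neg (by omega), if_neg (by omega), Perm.one_apply]
    obtain ⟨i, rfl⟩ := Nat.exists_eq_add_of_le hj
    rw [show (m + i) * d + r = i * d + r + m * d by ring, shift_apply_add_s16]
    match i with
    | 0 =>
      rw [zero_mul, zero_add, theta_mul_shift_apply_of_lt h₁ hr, add_zero, swap_apply_left,
        if_pos rfl]
      ring
    | 1 =>
      rw [one_mul, add_comm d, theta_mul_shift_apply_add h₁ h₂ hr, swap_apply_right,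
        if_neg (by omega), if_pos rfl]
      ring
    | i + 2 =>
      rw [theta_mul_shift_apply_of_le h₁ h₂ (by nlinarith), swap_apply_of_ne_of_ne (by omega)
        (by omega), if_neg (by omega), if_neg (by omega), Perm.one_apply]
      ring

variable [NeZero d] {τ : Perm ℕ}

lemma shift_theta_mul_shift_mem_blockPerms (h₁ : ς₁ ∈ supportedBelow d)
    (h₂ : ς₂ ∈ supportedBelow d) {m n : ℕ} (hm : m + 1 < n) :
    shift (m * d) (theta d * ς₁ * shift d ς₂) ∈ blockPerms d n :=
  (isBlockForm_shift_theta_mul_shift h₁ h₂ m).mem_blockPerms fun j hj => by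
    simp [swap_apply_of_ne_of_ne, show j ≠ m by omega, show j ≠ m + 1 by omega]

lemma blockPermHom_shift_theta_mul_shift (h₁ : ς₁ ∈ supportedBelow d)
    (h₂ : ς₂ ∈ supportedBelow d) {m n : ℕ} (hm : m + 1 < n) :
    blockPermHom d n ⟨_, shift_theta_mul_shift_mem_blockPerms h₁ h₂ hm⟩ =
      swap ⟨m, by omega⟩ ⟨m + 1, hm⟩ := by
  ext j
  rw [(isBlockForm_shift_theta_mul_shift h₁ h₂ m).blockPermHom_apply]
  simp only [swap_apply_def, Fin.ext_iff]
  split_ifs <;> rfl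

lemma theta_mul_shift_sq (h₁ : ς₁ ∈ supportedBelow d) (h₂ : ς₂ ∈ supportedBelow d)
    (hτ : ς₁ * ς₂ = τ) (hτ' : ς₂ * ς₁ = τ) :
    (theta d * ς₁ * shift d ς₂) ^ 2 = τ * shift d τ := by
  have hτmem : τ ∈ supportedBelow d := hτ ▸ mul_mem h₁ h₂
  have hσ := isBlockForm_shift_theta_mul_shift h₁ h₂ 0
  have hτ₀ := isBlockForm_shift hτmem 0
  have hτ₁ := isBlockForm_shift hτmem 1
  rw [zero_mul, shift_zero] at hσ hτ₀
  rw [one_mul] at hτ₁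
  refine (sq _).trans <| (hσ.mul hσ).ext (hτ₀.mul hτ₁) (by simp) fun j => ?_
  match j with
  | 0 => simp [hτ']
  | 1 => simp [hτ]
  | j + 2 => simp [swap_apply_of_ne_of_ne]

lemma shift_theta_mul_shift_pow (h₁ : ς₁ ∈ supportedBelow d) (h₂ : ς₂ ∈ supportedBelow d)
    (hτ : ς₁ * ς₂ = τ) (hτ' : ς₂ * ς₁ = τ) (k m : ℕ) :
    shift (m * d) (theta d * ς₁ * shift d ς₂) ^ (2 * k + 1) =
      shift (m * d) (theta d * ς₁ * shift d ς₂) * shift (m * d) (τ ^ k * shift d (τ ^ k)) := by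
  have hτmem : τ ∈ supportedBelow d := hτ ▸ mul_mem h₁ h₂
  have hcomm : Commute τ (shift d τ) := by
    simpa [shift_zero] using commute_shift_mul_shift hτmem hτmem (i := 0) (j := 1) (by omega)
  rw [pow_succ', pow_mul, ← shift_pow, theta_mul_shift_sq h₁ h₂ hτ hτ', ← shift_pow,
    hcomm.mul_pow, shift_pow]

lemma commute_mul_pow (hτ : ς₁ * ς₂ = τ) (hτ' : ς₂ * ς₁ = τ) (k : ℕ) :
    Commute (ς₁ * τ ^ k) τ :=
  (hτ ▸ (Commute.refl ς₁).mul_right (hτ.trans hτ'.symm)).mul_left ((Commute.refl τ).pow_left k)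

lemma mul_pow_inv_eq_mul_pow (hτ : ς₁ * ς₂ = τ) (hτ' : ς₂ * ς₁ = τ) {k : ℕ}
    (hk : τ ^ (2 * k + 1) = 1) :
    (ς₁ * τ ^ k)⁻¹ = ς₂ * τ ^ k := by
  have hcomm : Commute ς₂ τ := hτ ▸ Commute.mul_right (hτ.trans hτ'.symm).symm (Commute.refl ς₂)
  refine inv_eq_of_mul_eq_one_right ?_
  calc ς₁ * τ ^ k * (ς₂ * τ ^ k) = ς₁ * (τ ^ k * ς₂) * τ ^ k := by group
    _ = ς₁ * ς₂ * (τ ^ k * τ ^ k) := by rw [← (hcomm.pow_right k).eq]; group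
    _ = 1 := by rw [hτ, ← pow_add, ← pow_succ', ← hk]; ring_nf

lemma twistHom_swap_eq (h₁ : ς₁ ∈ supportedBelow d) (h₂ : ς₂ ∈ supportedBelow d)
    (hτ : ς₁ * ς₂ = τ) (hτ' : ς₂ * ς₁ = τ) {k : ℕ} (hk : τ ^ (2 * k + 1) = 1)
    (hu : ς₁ * τ ^ k ∈ supportedBelow d) (m : ℕ) :
    twistHom d (ς₁ * τ ^ k) hu (swap m (m + 1)) =
      shift (m * d) (theta d * ς₁ * shift d ς₂) * shift (m * d) (τ ^ k * shift d (τ ^ k)) := by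
  have hτk : τ ^ k ∈ supportedBelow d := pow_mem (hτ ▸ mul_mem h₁ h₂) k
  rw [shift_mul _ (τ ^ k), shift_shift, ← add_one_mul]
  refine (isBlockForm_twistHom hu _).ext ((isBlockForm_shift_theta_mul_shift h₁ h₂ m).mul
    ((isBlockForm_shift hτk m).mul (isBlockForm_shift hτk (m + 1)))) (by simp) fun j => ?_
  simp only [Perm.mul_apply, Perm.one_apply, Pi.mulSingle_apply]
  by_cases hjm : j = m
  · subst hjm; simp
  by_cases hjm' : j = m + 1
  · subst hjm'
    simp [mul_pow_inv_eq_mul_pow hτ hτ' hk]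
  · simp [swap_apply_of_ne_of_ne hjm hjm', hjm, hjm']

end generators

lemma shift_mul_shift_pow_mem_closure {d n m : ℕ} (τ : Perm ℕ) (k : ℕ) (hm : m + 1 < n) :
    shift (m * d) (τ ^ k * shift d (τ ^ k)) ∈
      Subgroup.closure {x | ∃ j < n, x ∈ Subgroup.zpowers (shift (j * d) τ)} := by
  rw [shift_mul, shift_shift, ← add_one_mul, shift_pow, shift_pow]
  exact mul_mem (Subgroup.subset_closure ⟨m, by omega, Subgroup.npow_mem_zpowers _ k⟩)
    (Subgroup.subset_closure ⟨m + 1, hm, Subgroup.npow_mem_zpowers _ k⟩)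

lemma Subgroup.closure_shift_le {d n : ℕ} {σ : Perm ℕ} {H : Subgroup (Perm ℕ)}
    (hH : ∀ m, m + 1 < n → shift (m * d) σ ∈ H) :
    closure {x | ∃ s, 1 ≤ s ∧ s ≤ n - 1 ∧ x = shift ((s - 1) * d) σ} ≤ H := by
  rw [closure_le]
  rintro _ ⟨s, hs, hsn, rfl⟩
  exact hH (s - 1) (by omega)

/-- If the order `q` of `τ` is odd, the extension `1 → Aₙ(σ) → Bₙ(σ) → Sₙ → 1`
splits: there is a surjection `φ : Bₙ(σ) → Sₙ` with kernel `Aₙ(σ)` sending `σ_s` to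
`(s, s+1)`, and a homomorphism `ρ : Sₙ → Bₙ(σ)` with `φ ∘ ρ = id`; concretely `ρ`
sends `(s, s+1)` to `σ_s·ω^{(s-1)d}(a)` where `a = τ^k·ω^d(τ^ℓ)` with
`k + ℓ ≡ -1 (mod q)`. -/
theorem stmt_16 (d n : ℕ) (hd : 2 ≤ d) (ς₁ ς₂ τ : Equiv.Perm ℕ)
    (h₁ : ∀ k, d ≤ k → ς₁ k = k) (h₂ : ∀ k, d ≤ k → ς₂ k = k)
    (hτ : ς₁ * ς₂ = τ) (hτ' : ς₂ * ς₁ = τ)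
    (σ : Equiv.Perm ℕ) (hσ : σ = theta d * ς₁ * shift d ς₂)
    (σs : ℕ → Equiv.Perm ℕ) (hσs : ∀ s, σs s = shift ((s - 1) * d) σ)
    (B T A : Subgroup (Equiv.Perm ℕ))
    (hB : B = Subgroup.closure {x | ∃ s, 1 ≤ s ∧ s ≤ n - 1 ∧ x = σs s})
    (hT : T = Subgroup.closure {x | ∃ k < n, x ∈ Subgroup.zpowers (shift (k * d) τ)})
    (hA : A = B ⊓ T)
    (q : ℕ) (hq : q = orderOf τ) (hodd : Odd q) :
    ∃ φ : ↥B →* Equiv.Perm (Fin n),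
      Function.Surjective φ ∧
      φ.ker = A.subgroupOf B ∧
      (∀ (s : ℕ) (h1 : 1 ≤ s) (h2 : s ≤ n - 1) (hmem : σs s ∈ B),
        φ ⟨σs s, hmem⟩ =
          Equiv.swap (⟨s - 1, by omega⟩ : Fin n) (⟨s, by omega⟩ : Fin n)) ∧
      ∃ ρ : Equiv.Perm (Fin n) →* ↥B,
        φ.comp ρ = MonoidHom.id _ ∧
        ∃ k ℓ : ℤ, (q : ℤ) ∣ k + ℓ + 1 ∧
          ∀ (s : ℕ) (h1 : 1 ≤ s) (h2 : s ≤ n - 1),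
            ((ρ (Equiv.swap (⟨s - 1, by omega⟩ : Fin n) (⟨s, by omega⟩ : Fin n)) :
                Equiv.Perm ℕ) =
              σs s * shift ((s - 1) * d) (τ ^ k * shift d (τ ^ ℓ))) := by
  obtain ⟨k, rfl⟩ := hodd
  obtain rfl := funext hσs
  subst hσ hA
  have : NeZero d := ⟨by omega⟩
  have h₁ : ς₁ ∈ supportedBelow d := (mem_fixingSubgroup_iff _).mpr h₁
  have h₂ : ς₂ ∈ supportedBelow d := (mem_fixingSubgroup_iff _).mpr h₂
  have hτmem : τ ∈ supportedBelow d := hτ ▸ mul_mem h₁ h₂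
  have hu : ς₁ * τ ^ k ∈ supportedBelow d := mul_mem h₁ (pow_mem hτmem k)
  set ρ := twistSection d n _ hu
  have hρswap (m : ℕ) (hm : m + 1 < n) : ρ (swap ⟨m, by omega⟩ ⟨m + 1, hm⟩) =
      shift (m * d) (theta d * ς₁ * shift d ς₂) * shift (m * d) (τ ^ k * shift d (τ ^ k)) :=
    (twistSection_swap hu hm).trans (twistHom_swap_eq h₁ h₂ hτ hτ' (hq ▸ pow_orderOf_eq_one τ) hu m)
  have hBP : B ≤ blockPerms d n := hB ▸ Subgroup.closure_shift_le fun m hm =>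
    shift_theta_mul_shift_mem_blockPerms h₁ h₂ hm
  have hBT : B ≤ T ⊔ ρ.range := hB ▸ Subgroup.closure_shift_le fun m hm => by
    rw [eq_mul_inv_of_mul_eq (hρswap m hm).symm, hT]
    exact mul_mem (Subgroup.mem_sup_right ⟨_, rfl⟩)
      (Subgroup.mem_sup_left (inv_mem (shift_mul_shift_pow_mem_closure τ k hm)))
  have hρB : ρ.range ≤ B := ρ.range_le_of_swap_succ_mem fun m hm => by
    rw [hρswap, ← shift_theta_mul_shift_pow h₁ h₂ hτ hτ', hB]
    refine pow_mem (Subgroup.subset_closure ?_) _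
    exact ⟨m + 1, by omega, by omega, rfl⟩
  obtain ⟨φ, hsurj, hker, hφ, ρ', hρ', hρ'ρ⟩ := Subgroup.exists_splitting_of_le_sup
    (blockPermHom d n) ρ (twistSection_mem_blockPerms hu) (blockPermHom_twistSection hu)
    (hT ▸ closure_shift_zpowers_le_map_ker hτmem)
    (hT ▸ range_twistSection_le_normalizer hu hτmem (commute_mul_pow hτ hτ' k)) hBP hBT hρB
  refine ⟨φ, hsurj, hker, fun s h1 h2 hmem => ?_, ρ', hρ', k, k, ⟨1, by push_cast; ring⟩,
    fun s h1 h2 => ?_⟩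
  all_goals obtain ⟨m, rfl⟩ : ∃ m, s = m + 1 := ⟨s - 1, by omega⟩
  · rw [hφ]
    exact blockPermHom_shift_theta_mul_shift h₁ h₂ (by omega)
  · rw [hρ'ρ]
    simpa using hρswap m (by omega)
end
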